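/- In the construction of the weight-tied network of the universality theorem (block subdiagonal-shift linear map W_z with blocks W², …, W^{k}, input injection W_x placing W¹ x in the first block, bias b̃ = (b¹, …, b^{k}), and blockwise nonlinearity σ = (σ¹, …, σ^{k})), the following invariant holds for every 1 ≤ i ≤ k and every initialization z̃^{[1]} ∈ V: the i-th iterate z̃^{[i+1]} of the update z̃ ↦ σ(W_z z̃ + W_x x + b̃) has its j-th block equal to z^{j+1} (the (j+1)-st hidden layer of the original k-layer network z² = σ¹(W¹ x + b¹), z^{i+1} = σ^{i}(W^{i} z^{i} + b^{i})) for all 1 ≤ j ≤ i. -/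

import Mathlib

/-- The original `k`-layer network: `origNet … i` is the hidden layer
`z^{i+2}` of the paper's notation, i.e. `origNet … 0 = z² = σ¹(W¹ x + b¹)`
and `origNet … (i+1) = σ^{i+2}(W^{i+2} (origNet … i) + b^{i+2})`. -/
def origNet (dims : ℕ → ℕ)
    (W : (i : ℕ) → Matrix (Fin (dims (i + 1))) (Fin (dims i)) ℝ)
    (b : (i : ℕ) → Fin (dims (i + 1)) → ℝ)
    (σ : (i : ℕ) → (Fin (dims (i + 1)) → ℝ) → (Fin (dims (i + 1)) → ℝ))
    (x : Fin (dims 0) → ℝ) : (i : ℕ) → Fin (dims (i + 1)) → ℝ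
  | 0 => σ 0 ((W 0).mulVec x + b 0)
  | (i + 1) => σ (i + 1) ((W (i + 1)).mulVec (origNet dims W b σ x i) + b (i + 1))

/-- One step `z̃ ↦ σ(W_z z̃ + W_x x + b̃)` of the weight-tied, input-injected
network built from the block subdiagonal-shift matrix `W_z` (blocks
`W², …, W^k`), input injection `W_x` placing `W¹ x` in the first block, bias
`b̃ = (b¹, …, b^k)`, and blockwise nonlinearity `σ = (σ¹, …, σ^k)`. -/
def tiedStep (k : ℕ) (dims : ℕ → ℕ)
    (W : (i : ℕ) → Matrix (Fin (dims (i + 1))) (Fin (dims i)) ℝ)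
    (b : (i : ℕ) → Fin (dims (i + 1)) → ℝ)
    (σ : (i : ℕ) → (Fin (dims (i + 1)) → ℝ) → (Fin (dims (i + 1)) → ℝ))
    (x : Fin (dims 0) → ℝ)
    (v : (i : Fin k) → Fin (dims (i.1 + 1)) → ℝ) :
    (i : Fin k) → Fin (dims (i.1 + 1)) → ℝ
  | ⟨0, _⟩ => σ 0 ((W 0).mulVec x + b 0)
  | ⟨j + 1, h⟩ => σ (j + 1) ((W (j + 1)).mulVec (v ⟨j, by omega⟩) + b (j + 1))

section TiedStep

variable {k : ℕ} {dims : ℕ → ℕ} {W : (i : ℕ) → Matrix (Fin (dims (i + 1))) (Fin (dims i)) ℝ}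
  {b : (i : ℕ) → Fin (dims (i + 1)) → ℝ}
  {σ : (i : ℕ) → (Fin (dims (i + 1)) → ℝ) → (Fin (dims (i + 1)) → ℝ)} {x : Fin (dims 0) → ℝ}

theorem tiedStep_apply_zero (v : (i : Fin k) → Fin (dims (i.1 + 1)) → ℝ) (h : 0 < k) :
    tiedStep k dims W b σ x v ⟨0, h⟩ = origNet dims W b σ x 0 :=
  rfl

theorem tiedStep_apply_succ_eq_origNet (v : (i : Fin k) → Fin (dims (i.1 + 1)) → ℝ) {j : ℕ}
    (h : j + 1 < k) (hv : v ⟨j, by omega⟩ = origNet dims W b σ x j) :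
    tiedStep k dims W b σ x v ⟨j + 1, h⟩ = origNet dims W b σ x (j + 1) := by
  change σ (j + 1) ((W (j + 1)).mulVec (v ⟨j, by omega⟩) + b (j + 1)) = _
  rw [hv]
  rfl

theorem iterate_tiedStep_apply_of_lt (z : (i : Fin k) → Fin (dims (i.1 + 1)) → ℝ) :
    ∀ (n j : ℕ) (hj : j < k), j < n →
      (tiedStep k dims W b σ x)^[n] z ⟨j, hj⟩ = origNet dims W b σ x j
  | 0, _, _, hjn => absurd hjn (Nat.not_lt_zero _)
  | n + 1, 0, hj, _ => by
    rw [Function.iterate_succ_apply']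
    exact tiedStep_apply_zero _ hj
  | n + 1, j + 1, hj, hjn => by
    rw [Function.iterate_succ_apply']
    exact tiedStep_apply_succ_eq_origNet _ hj
      (iterate_tiedStep_apply_of_lt z n j (by omega) (by omega))

end TiedStep

/-- Inductive invariant for the weight-tied universality construction: for
every `1 ≤ i ≤ k` and every initialization `z̃^{[1]}`, the `i`-th iterate of
the weight-tied update has its `j`-th block (for `1 ≤ j ≤ i`) equal to the
original network's hidden layer `z^{j+1}` (which is `origNet … (j-1)` in the
0-based encoding). -/
theorem weight_tied_invariant (k : ℕ) (dims : ℕ → ℕ)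
    (W : (i : ℕ) → Matrix (Fin (dims (i + 1))) (Fin (dims i)) ℝ)
    (b : (i : ℕ) → Fin (dims (i + 1)) → ℝ)
    (σ : (i : ℕ) → (Fin (dims (i + 1)) → ℝ) → (Fin (dims (i + 1)) → ℝ))
    (x : Fin (dims 0) → ℝ)
    (zinit : (i : Fin k) → Fin (dims (i.1 + 1)) → ℝ) :
    ∀ (i : ℕ) (_ : 1 ≤ i) (_ : i ≤ k) (j : ℕ) (_ : 1 ≤ j) (hji : j ≤ i),
      ((tiedStep k dims W b σ x)^[i] zinit) ⟨j - 1, by omega⟩ =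
        origNet dims W b σ x (j - 1) := by
  intro i _ hik j hj hji
  exact iterate_tiedStep_apply_of_lt zinit i (j - 1) (by omega) (by omega)
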